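/- arXiv:2505.23215 — 2 statements merged into one kernel-verified Lean document; each statement's English description precedes it below -/
import Mathlib

section
/- Let p_t be the density of N(m_t, τ_t·Id_d) on ℝ^d with m_t = (1-t)x₀ + t x₁ and τ_t = η² t(1-t) + ρ², and let u_t(x) = (x₁ − x₀) + (x − m_t)·(η²/(2τ_t))·((1−2t) − 1). Then p_t satisfies the Fokker–Planck equation ∂_t p_t(x) = −∇·(p_t u_t)(x) + (η²/2) Δp_t(x) for all x ∈ ℝ^d and t ∈ (0,1). -/
open Real MeasureTheory

set_option maxHeartbeats 1000000 in
theorem stmt_1 (d : ℕ) (x₀ x₁ : EuclideanSpace ℝ (Fin d)) (η ρ : ℝ) (hη : 0 < η) (hρ : 0 < ρ)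
    (m : ℝ → EuclideanSpace ℝ (Fin d)) (τ : ℝ → ℝ)
    (hm : ∀ t, m t = (1 - t) • x₀ + t • x₁)
    (hτ : ∀ t, τ t = η ^ 2 * t * (1 - t) + ρ ^ 2)
    (p : ℝ → EuclideanSpace ℝ (Fin d) → ℝ)
    (hp : ∀ t x, p t x =
      (2 * Real.pi * τ t) ^ (-(d : ℝ) / 2) * Real.exp (-‖x - m t‖ ^ 2 / (2 * τ t)))
    (u : ℝ → EuclideanSpace ℝ (Fin d) → EuclideanSpace ℝ (Fin d))
    (hu : ∀ t x, u t x = (x₁ - x₀) + (η ^ 2 / (2 * τ t) * ((1 - 2 * t) - 1)) • (x - m t))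
    (t : ℝ) (ht : t ∈ Set.Ioo (0 : ℝ) 1) (x : EuclideanSpace ℝ (Fin d)) :
    HasDerivAt (fun s => p s x)
      (-(∑ i : Fin d, fderiv ℝ (fun y => p t y * u t y i) x (EuclideanSpace.single i 1))
        + η ^ 2 / 2 *
          ∑ i : Fin d, fderiv ℝ (fun y => fderiv ℝ (fun z => p t z) y
            (EuclideanSpace.single i 1)) x (EuclideanSpace.single i 1)) t := by
  obtain ⟨ht0, ht1⟩ := ht
  have hTpos : 0 < τ t := by rw [hτ]; nlinarith [mul_pos (mul_pos (pow_pos hη 2) ht0) (show (0:ℝ) < 1 - t by linarith), pow_pos hρ 2]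
  have hTne : τ t ≠ 0 := ne_of_gt hTpos
  have h2πT : 0 < 2 * Real.pi * τ t := by positivity
  -- spatial first derivative of p t
  have key1 : ∀ y : EuclideanSpace ℝ (Fin d), HasFDerivAt (fun z => p t z)
      ((-(τ t)⁻¹ * p t y) • (innerSL ℝ (y - m t))) y := by
    intro y
    have hfun : (fun z => p t z) = fun z : EuclideanSpace ℝ (Fin d) =>
        (2 * Real.pi * τ t) ^ (-(d : ℝ) / 2) *
          Real.exp ((-(2 * τ t)⁻¹) * ‖z - m t‖ ^ 2) := by
      funext z
      rw [hp]
      congr 1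
      congr 1
      field_simp
    rw [hfun]
    have h1 : HasFDerivAt (fun z : EuclideanSpace ℝ (Fin d) => z - m t)
        (ContinuousLinearMap.id ℝ _) y := (hasFDerivAt_id y).sub_const _
    have h2 := h1.norm_sq
    have h3 := ((h2.const_mul (-(2 * τ t)⁻¹)).exp).const_mul
      ((2 * Real.pi * τ t) ^ (-(d : ℝ) / 2))
    refine h3.congr_fderiv (Eq.symm ?_)
    ext v
    simp only [ContinuousLinearMap.smul_apply, ContinuousLinearMap.coe_smul', Pi.smul_apply,
      ContinuousLinearMap.comp_apply, ContinuousLinearMap.id_apply, innerSL_apply_apply,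
      smul_eq_mul, hp, two_smul, ContinuousLinearMap.add_apply]
    have : Real.exp (-‖y - m t‖ ^ 2 / (2 * τ t)) =
        Real.exp ((-(2 * τ t)⁻¹) * ‖y - m t‖ ^ 2) := by congr 1; field_simp
    rw [this]
    field_simp
    ring
  -- coordinate projections
  have hcoord : ∀ (i : Fin d) (y : EuclideanSpace ℝ (Fin d)),
      HasFDerivAt (fun z : EuclideanSpace ℝ (Fin d) => z i)
        (EuclideanSpace.proj (𝕜 := ℝ) i) y := fun i y =>
    ((EuclideanSpace.proj (𝕜 := ℝ) i).hasFDerivAt (x := y)).congr_of_eventuallyEq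
      (Filter.Eventually.of_forall fun z => rfl)
  -- value of the spatial derivative on basis vectors
  have hval : ∀ (i : Fin d) (y : EuclideanSpace ℝ (Fin d)),
      fderiv ℝ (fun z => p t z) y (EuclideanSpace.single i 1)
        = -(τ t)⁻¹ * p t y * (y i - m t i) := by
    intro i y
    rw [(key1 y).fderiv]
    simp [EuclideanSpace.inner_single_right, mul_assoc]
  -- derivative of the coordinates of u
  have hUc : ∀ i : Fin d, HasFDerivAt (fun y : EuclideanSpace ℝ (Fin d) => u t y i)
      ((η ^ 2 / (2 * τ t) * (1 - 2 * t - 1)) • (EuclideanSpace.proj (𝕜 := ℝ) i)) x := by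
    intro i
    have hfun : (fun y : EuclideanSpace ℝ (Fin d) => u t y i)
        = fun y => (x₁ i - x₀ i) + (η ^ 2 / (2 * τ t) * (1 - 2 * t - 1)) * (y i - m t i) := by
      funext y
      rw [hu]
      simp [PiLp.add_apply, PiLp.sub_apply, PiLp.smul_apply]
    rw [hfun]
    exact (((hcoord i x).sub_const (m t i)).const_mul
      (η ^ 2 / (2 * τ t) * (1 - 2 * t - 1))).const_add _
  have hfd1 : ∀ i : Fin d, fderiv ℝ (fun y => p t y * u t y i) x (EuclideanSpace.single i 1)
      = p t x * (η ^ 2 / (2 * τ t) * (1 - 2 * t - 1))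
        + ((x₁ i - x₀ i) + (η ^ 2 / (2 * τ t) * (1 - 2 * t - 1)) * (x i - m t i))
          * (-(τ t)⁻¹ * p t x * (x i - m t i)) := by
    intro i
    have huxi : u t x i = (x₁ i - x₀ i)
        + (η ^ 2 / (2 * τ t) * (1 - 2 * t - 1)) * (x i - m t i) := by
      rw [hu]; simp [PiLp.add_apply, PiLp.sub_apply, PiLp.smul_apply]
    rw [HasFDerivAt.fderiv (f := fun y => p t y * u t y i) ((key1 x).mul (hUc i))]
    simp [EuclideanSpace.inner_single_right, EuclideanSpace.single_apply, huxi]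
  have hfd2 : ∀ i : Fin d, fderiv ℝ (fun y => fderiv ℝ (fun z => p t z) y
        (EuclideanSpace.single i 1)) x (EuclideanSpace.single i 1)
      = -(τ t)⁻¹ * p t x + (τ t)⁻¹ * (τ t)⁻¹ * p t x * (x i - m t i) ^ 2 := by
    intro i
    have hfun : (fun y => fderiv ℝ (fun z => p t z) y (EuclideanSpace.single i 1))
        = fun y => -(τ t)⁻¹ * p t y * (y i - m t i) := funext fun y => hval i y
    rw [hfun]
    have hA : HasFDerivAt (fun y : EuclideanSpace ℝ (Fin d) => -(τ t)⁻¹ * p t y)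
        ((-(τ t)⁻¹) • ((-(τ t)⁻¹ * p t x) • (innerSL ℝ (x - m t)))) x :=
      (key1 x).const_mul _
    have hB : HasFDerivAt (fun y : EuclideanSpace ℝ (Fin d) => y i - m t i)
        (EuclideanSpace.proj (𝕜 := ℝ) i) x := (hcoord i x).sub_const _
    rw [HasFDerivAt.fderiv (f := fun y => -(τ t)⁻¹ * p t y * (y i - m t i)) (hA.mul hB)]
    simp [EuclideanSpace.inner_single_right, EuclideanSpace.single_apply]
    ring
  -- time derivatives
  have hτd : HasDerivAt τ (η ^ 2 * (1 - 2 * t)) t := by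
    have hfun : τ = fun s => η ^ 2 * s * (1 - s) + ρ ^ 2 := funext hτ
    rw [hfun]
    have h := ((HasDerivAt.const_mul (η ^ 2) (hasDerivAt_id t)).mul
      (HasDerivAt.const_sub 1 (hasDerivAt_id t))).add_const (ρ ^ 2)
    refine h.congr_deriv (Eq.symm ?_)
    simp only [id_eq]
    ring
  have hmd : HasDerivAt m (x₁ - x₀) t := by
    have hfun : m = fun s => (1 - s) • x₀ + s • x₁ := funext hm
    rw [hfun]
    have h := ((HasDerivAt.const_sub 1 (hasDerivAt_id t)).smul_const x₀).add
      ((hasDerivAt_id t).smul_const x₁)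
    refine h.congr_deriv (Eq.symm ?_)
    module
  have hqd : HasDerivAt (fun s => ‖x - m s‖ ^ 2)
      (2 * (inner ℝ (x - m t) (-(x₁ - x₀)) : ℝ)) t := (HasDerivAt.const_sub x hmd).norm_sq
  have hBd : HasDerivAt (fun s => (2 * Real.pi * τ s) ^ (-(d : ℝ) / 2))
      ((2 * Real.pi * (η ^ 2 * (1 - 2 * t))) * (-(d : ℝ) / 2)
        * (2 * Real.pi * τ t) ^ (-(d : ℝ) / 2 - 1)) t :=
    (HasDerivAt.const_mul (2 * Real.pi) hτd).rpow_const (Or.inl (ne_of_gt h2πT))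
  have hEd : HasDerivAt (fun s => -‖x - m s‖ ^ 2 / (2 * τ s))
      (((-(2 * (inner ℝ (x - m t) (-(x₁ - x₀)) : ℝ))) * (2 * τ t)
        - (-‖x - m t‖ ^ 2) * (2 * (η ^ 2 * (1 - 2 * t)))) / (2 * τ t) ^ 2) t :=
    (hqd.neg).div (HasDerivAt.const_mul 2 hτd) (by positivity)
  have hPd : HasDerivAt (fun s => p s x)
      ((2 * Real.pi * (η ^ 2 * (1 - 2 * t))) * (-(d : ℝ) / 2)
          * (2 * Real.pi * τ t) ^ (-(d : ℝ) / 2 - 1) * Real.exp (-‖x - m t‖ ^ 2 / (2 * τ t))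
        + (2 * Real.pi * τ t) ^ (-(d : ℝ) / 2)
          * (Real.exp (-‖x - m t‖ ^ 2 / (2 * τ t))
            * (((-(2 * (inner ℝ (x - m t) (-(x₁ - x₀)) : ℝ))) * (2 * τ t)
              - (-‖x - m t‖ ^ 2) * (2 * (η ^ 2 * (1 - 2 * t)))) / (2 * τ t) ^ 2))) t := by
    have hfun : (fun s => p s x) = fun s =>
        (2 * Real.pi * τ s) ^ (-(d : ℝ) / 2) * Real.exp (-‖x - m s‖ ^ 2 / (2 * τ s)) :=
      funext fun s => hp s x
    rw [hfun]
    exact hBd.mul hEd.exp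
  convert hPd using 1
  simp only [hfd1, hfd2]
  have hinner : (inner ℝ (x - m t) (-(x₁ - x₀)) : ℝ)
      = -∑ i : Fin d, (x i - m t i) * (x₁ i - x₀ i) := by
    rw [inner_neg_right, neg_inj, PiLp.inner_apply]
    exact Finset.sum_congr rfl fun i _ => by
      simp [PiLp.sub_apply, RCLike.inner_apply, mul_comm]
  have hnorm : ‖x - m t‖ ^ 2 = ∑ i : Fin d, (x i - m t i) ^ 2 := by
    rw [← real_inner_self_eq_norm_sq, PiLp.inner_apply]
    exact Finset.sum_congr rfl fun i _ => by
      simp [PiLp.sub_apply, RCLike.inner_apply, sq]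
  have hsum1 : ∑ i : Fin d, (p t x * (η ^ 2 / (2 * τ t) * (1 - 2 * t - 1))
        + ((x₁ i - x₀ i) + (η ^ 2 / (2 * τ t) * (1 - 2 * t - 1)) * (x i - m t i))
          * (-(τ t)⁻¹ * p t x * (x i - m t i)))
      = (d : ℝ) * (p t x * (η ^ 2 / (2 * τ t) * (1 - 2 * t - 1)))
        + (-(τ t)⁻¹ * p t x) * (∑ i : Fin d, (x i - m t i) * (x₁ i - x₀ i))
        + (-(τ t)⁻¹ * p t x * (η ^ 2 / (2 * τ t) * (1 - 2 * t - 1)))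
          * (∑ i : Fin d, (x i - m t i) ^ 2) := by
    rw [Finset.mul_sum, Finset.mul_sum]
    rw [show (d : ℝ) * (p t x * (η ^ 2 / (2 * τ t) * (1 - 2 * t - 1)))
        = ∑ _i : Fin d, p t x * (η ^ 2 / (2 * τ t) * (1 - 2 * t - 1)) by
      simp [Finset.sum_const, Finset.card_univ, mul_comm]]
    rw [← Finset.sum_add_distrib, ← Finset.sum_add_distrib]
    exact Finset.sum_congr rfl fun i _ => by ring
  have hsum2 : ∑ i : Fin d, (-(τ t)⁻¹ * p t x
        + (τ t)⁻¹ * (τ t)⁻¹ * p t x * (x i - m t i) ^ 2)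
      = (d : ℝ) * (-(τ t)⁻¹ * p t x)
        + (τ t)⁻¹ * (τ t)⁻¹ * p t x * (∑ i : Fin d, (x i - m t i) ^ 2) := by
    rw [Finset.sum_add_distrib, Finset.mul_sum]
    simp [Finset.sum_const, Finset.card_univ]
  rw [hsum1, hsum2, hinner]
  have he2 : (2 * Real.pi * τ t) ^ (-(d : ℝ) / 2 - 1)
      = (2 * Real.pi * τ t) ^ (-(d : ℝ) / 2) / (2 * Real.pi * τ t) := by
    rw [Real.rpow_sub h2πT, Real.rpow_one]
  rw [he2, hp, hnorm]
  field_simp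
  ring
end

section
/- For a jump density of the form q_t(y, x) = λ_t(x) J_t(y), where J_t = max(0, ξ_t) p_t / ∫ max(0, ξ_t) p_t dy and λ_t(x) = max(0, −ξ_t(x)), with p_t a probability density and ξ_t a function satisfying ∫ ξ_t p_t dy = 0, the Kolmogorov jump term satisfies ∫ (p_t(y) q_t(x, y) − p_t(x) q_t(y, x)) dy = p_t(x) ξ_t(x) for all x, provided ∫ max(0, ξ_t) p_t dy > 0. -/
open Real MeasureTheory

theorem stmt_18 (d : ℕ) (p ξ lam J : EuclideanSpace ℝ (Fin d) → ℝ)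
    (hpm : Measurable p) (hξm : Measurable ξ)
    (hpnn : ∀ x, 0 ≤ p x) (hp1 : ∫ x, p x = 1)
    (hint1 : Integrable (fun y => ξ y * p y)) (hξ0 : ∫ y, ξ y * p y = 0)
    (hint2 : Integrable (fun y => max 0 (ξ y) * p y))
    (hpos : 0 < ∫ y, max 0 (ξ y) * p y)
    (hlam : ∀ x, lam x = max 0 (-ξ x))
    (hJ : ∀ y, J y = max 0 (ξ y) * p y / ∫ z, max 0 (ξ z) * p z) :
    ∀ x, (∫ y, (p y * (lam y * J x) - p x * (lam x * J y))) = p x * ξ x := by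
  intro x
  set I : ℝ := ∫ z, max 0 (ξ z) * p z with hI
  have hIne : I ≠ 0 := ne_of_gt hpos
  have hplam : ∀ y, p y * lam y = max 0 (ξ y) * p y - ξ y * p y := by
    intro y
    rw [hlam]
    rcases le_total 0 (ξ y) with h | h
    · rw [max_eq_left (by linarith), max_eq_right h]; ring
    · rw [max_eq_right (by linarith), max_eq_left (by linarith)]; ring
  have h1 : (fun y => p y * (lam y * J x))
      = fun y => (max 0 (ξ y) * p y - ξ y * p y) * J x := by
    funext y; rw [← hplam y]; ring
  have h2 : (fun y => p x * (lam x * J y))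
      = fun y => (p x * lam x / I) * (max 0 (ξ y) * p y) := by
    funext y; rw [hJ y]; ring
  have hi1 : Integrable (fun y => p y * (lam y * J x)) := by
    rw [h1]; exact (hint2.sub hint1).mul_const _
  have hi2 : Integrable (fun y => p x * (lam x * J y)) := by
    rw [h2]; exact hint2.const_mul _
  rw [integral_sub hi1 hi2, h1, h2, integral_mul_const, integral_sub hint2 hint1,
    integral_const_mul, ← hI, hξ0, sub_zero, hJ x]
  rw [hlam x]
  have e1 : ((0 ⊔ ξ x) * p x / I) * I = (0 ⊔ ξ x) * p x := div_mul_cancel₀ _ hIne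
  have e2 : p x * (0 ⊔ -ξ x) / I * I = p x * (0 ⊔ -ξ x) := div_mul_cancel₀ _ hIne
  rw [mul_comm I, e1, e2]
  rcases le_total 0 (ξ x) with h | h
  · rw [max_eq_right h, max_eq_left (neg_nonpos.mpr h)]; ring
  · rw [max_eq_left h, max_eq_right (neg_nonneg.mpr h)]; ring
end
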